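/- Logarithmic divergence of the renormalization function: Let ρ be a Schwartz function on ℝ³ and let a, A : ℝ³ → Sym(3,ℝ) be measurable with C₀‖ξ‖² ≤ ξ·a(x)ξ ≤ C₁‖ξ‖² and C₀‖ξ‖² ≤ ξ·A(X)ξ ≤ C₁‖ξ‖² for all x, X, ξ ∈ ℝ³ and some 0 < C₀ ≤ C₁. Then for every κ ≥ 1 and X ∈ ℝ³ the integral E^κ(X) = −(1/2)(2π)^{−3} ∫_{ℝ³} (h₀(X,ξ)+1)^{−1/2} K(X,ξ)(K(X,ξ)+1)^{−2} |ρ̂(ξ/κ)|² dξ is absolutely convergent, and there exists a constant C such that |E^κ(X)| ≤ C log κ for all κ ≥ 2 and all X ∈ ℝ³. -/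

import Mathlib

open MeasureTheory Filter

/-- The Fourier transform `ρ̂(ξ) = ∫ e^{-i x·ξ} ρ(x) dx` of a Schwartz function on ℝ³. -/
noncomputable def fourierHat (ρ : SchwartzMap (EuclideanSpace ℝ (Fin 3)) ℂ)
    (ξ : EuclideanSpace ℝ (Fin 3)) : ℂ :=
  ∫ x : EuclideanSpace ℝ (Fin 3),
    Complex.exp (-Complex.I * ((inner ℝ x ξ : ℝ) : ℂ)) * ρ x

/-- The quadratic form `ξ ↦ ξ · M(x) ξ` associated to a matrix-valued function. -/
def qform (M : EuclideanSpace ℝ (Fin 3) → Matrix (Fin 3) (Fin 3) ℝ)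
    (x ξ : EuclideanSpace ℝ (Fin 3)) : ℝ :=
  ∑ i, ∑ j, ξ i * M x i j * ξ j

/-! By ellipticity the symbol factor of the integrand is `O((1 + |ξ|)⁻³)`, and since `ρ̂` is a
Schwartz function `|ρ̂(ξ/κ)|² = O((κ / (κ + |ξ|))²)`. The resulting radial majorant is integrable,
and in polar coordinates its integral is at most `2 ∫₀^∞ (κ - 1) / ((1 + r)(κ + r)) dr = 2 log κ`,
an antiderivative being `log (1 + r) - log (κ + r)`. -/

open Real Set FourierTransform Module Topology

theorem SchwartzMap.exists_one_add_norm_mul_le {E F : Type*} [NormedAddCommGroup E]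
    [NormedSpace ℝ E] [NormedAddCommGroup F] [NormedSpace ℝ F] (f : SchwartzMap E F) :
    ∃ D, ∀ x, (1 + ‖x‖) * ‖f x‖ ≤ D :=
  ⟨_, fun x => by
    simpa using SchwartzMap.one_add_le_sup_seminorm_apply (𝕜 := ℝ) (m := (1, 0)) le_rfl le_rfl f x⟩

theorem norm_apply_inv_smul_le {E F : Type*} [NormedAddCommGroup E] [NormedSpace ℝ E]
    [NormedAddCommGroup F] {f : E → F} {D κ : ℝ} (hf : ∀ x, (1 + ‖x‖) * ‖f x‖ ≤ D)
    (hκ : 0 < κ) (ξ : E) :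
    ‖f (κ⁻¹ • ξ)‖ ≤ D * (κ / (κ + ‖ξ‖)) := by
  have h := hf (κ⁻¹ • ξ)
  rw [norm_smul, norm_inv, Real.norm_of_nonneg hκ.le] at h
  rw [mul_div_assoc', le_div_iff₀ (by positivity)]
  calc ‖f (κ⁻¹ • ξ)‖ * (κ + ‖ξ‖) = κ * ((1 + κ⁻¹ * ‖ξ‖) * ‖f (κ⁻¹ • ξ)‖) := by
        field_simp
    _ ≤ κ * D := by gcongr
    _ = D * κ := mul_comm _ _

theorem fourierHat_apply_eq_fourier (ρ : SchwartzMap (EuclideanSpace ℝ (Fin 3)) ℂ)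
    (η : EuclideanSpace ℝ (Fin 3)) :
    fourierHat ρ η = 𝓕 ρ ((2 * π)⁻¹ • η) := by
  rw [SchwartzMap.fourier_coe, Real.fourier_eq', fourierHat]
  congr 1 with v
  rw [real_inner_smul_right, smul_eq_mul, show -2 * π * ((2 * π)⁻¹ * inner ℝ v η) =
    -inner ℝ v η by field_simp]
  push_cast
  ring_nf

theorem exists_schwartzMap_coe_eq_fourierHat (ρ : SchwartzMap (EuclideanSpace ℝ (Fin 3)) ℂ) :
    ∃ f : SchwartzMap (EuclideanSpace ℝ (Fin 3)) ℂ, ⇑f = fourierHat ρ := by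
  let e : EuclideanSpace ℝ (Fin 3) ≃L[ℝ] EuclideanSpace ℝ (Fin 3) :=
    ContinuousLinearEquiv.smulLeft (Units.mk0 (2 * π)⁻¹ (by positivity))
  refine ⟨SchwartzMap.compCLMOfContinuousLinearEquiv ℝ e (𝓕 ρ), funext fun η => ?_⟩
  rw [fourierHat_apply_eq_fourier]
  rfl

theorem continuous_qform (M : EuclideanSpace ℝ (Fin 3) → Matrix (Fin 3) (Fin 3) ℝ)
    (x : EuclideanSpace ℝ (Fin 3)) : Continuous (qform M x) := by
  unfold qform
  fun_prop

theorem inv_sqrt_mul_mul_inv_sq_le {s t u : ℝ} (hu : 0 < u) (ht : 0 ≤ t)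
    (hus : u ^ 2 ≤ s + 1) (hut : u ^ 2 ≤ t + 1) :
    (√(s + 1))⁻¹ * t * ((t + 1) ^ 2)⁻¹ ≤ (u ^ 3)⁻¹ := by
  have hsqrt : u ≤ √(s + 1) := Real.le_sqrt_of_sq_le hus
  have hfrac : t * ((t + 1) ^ 2)⁻¹ ≤ (u ^ 2)⁻¹ :=
    calc t * ((t + 1) ^ 2)⁻¹ ≤ (t + 1) * ((t + 1) ^ 2)⁻¹ := by gcongr; linarith
      _ = (t + 1)⁻¹ := by field_simp
      _ ≤ (u ^ 2)⁻¹ := by gcongr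
  calc (√(s + 1))⁻¹ * t * ((t + 1) ^ 2)⁻¹ = (√(s + 1))⁻¹ * (t * ((t + 1) ^ 2)⁻¹) := by ring
    _ ≤ u⁻¹ * (u ^ 2)⁻¹ := by gcongr
    _ = (u ^ 3)⁻¹ := by ring

theorem half_min_mul_one_add_sq_le {C₀ r : ℝ} (hC₀ : 0 < C₀) :
    min 1 C₀ / 2 * (1 + r) ^ 2 ≤ C₀ * r ^ 2 + 1 := by
  have hm : 0 ≤ min 1 C₀ := (lt_min one_pos hC₀).le
  calc min 1 C₀ / 2 * (1 + r) ^ 2 ≤ min 1 C₀ * 1 + min 1 C₀ * r ^ 2 := by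
        nlinarith [mul_nonneg hm (sq_nonneg (1 - r))]
    _ ≤ 1 * 1 + C₀ * r ^ 2 := by gcongr <;> simp
    _ = C₀ * r ^ 2 + 1 := by ring

noncomputable def renormIntegrand (ρ : SchwartzMap (EuclideanSpace ℝ (Fin 3)) ℂ)
    (a A : EuclideanSpace ℝ (Fin 3) → Matrix (Fin 3) (Fin 3) ℝ) (κ : ℝ)
    (X ξ : EuclideanSpace ℝ (Fin 3)) : ℝ :=
  (√(qform a X ξ + 1))⁻¹ * qform A X ξ * ((qform A X ξ + 1) ^ 2)⁻¹ *
    ‖fourierHat ρ (κ⁻¹ • ξ)‖ ^ 2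

theorem measurable_renormIntegrand (ρ : SchwartzMap (EuclideanSpace ℝ (Fin 3)) ℂ)
    (a A : EuclideanSpace ℝ (Fin 3) → Matrix (Fin 3) (Fin 3) ℝ) (κ : ℝ)
    (X : EuclideanSpace ℝ (Fin 3)) : Measurable (renormIntegrand ρ a A κ X) := by
  obtain ⟨f, hf⟩ := exists_schwartzMap_coe_eq_fourierHat ρ
  have hρ : Measurable (fourierHat ρ) := hf ▸ f.continuous.measurable
  have ha := (continuous_qform a X).measurable
  have hA := (continuous_qform A X).measurable
  unfold renormIntegrand
  fun_prop

noncomputable def radialMajorant (κ r : ℝ) : ℝ := ((1 + r) ^ 3)⁻¹ * (κ / (κ + r)) ^ 2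

theorem radialMajorant_le {κ r : ℝ} (hκ : 1 ≤ κ) (hr : 0 ≤ r) :
    radialMajorant κ r ≤ κ ^ 2 * ((1 + r) ^ 5)⁻¹ :=
  calc radialMajorant κ r ≤ ((1 + r) ^ 3)⁻¹ * (κ / (1 + r)) ^ 2 := by
        unfold radialMajorant; gcongr
    _ = κ ^ 2 * ((1 + r) ^ 5)⁻¹ := by field_simp

theorem integrable_radialMajorant {E : Type*} [NormedAddCommGroup E] [NormedSpace ℝ E]
    [FiniteDimensional ℝ E] [MeasurableSpace E] [BorelSpace E] (μ : Measure E)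
    [μ.IsAddHaarMeasure] (hE : finrank ℝ E < 5) {κ : ℝ} (hκ : 1 ≤ κ) :
    Integrable (fun x => radialMajorant κ ‖x‖) μ := by
  refine ((integrable_one_add_norm (μ := μ) (r := 5) (by exact_mod_cast hE)).const_mul
    (κ ^ 2)).mono' (by unfold radialMajorant; fun_prop) (ae_of_all _ fun x => ?_)
  have hr := norm_nonneg x
  have h0 : 0 ≤ radialMajorant κ ‖x‖ := by unfold radialMajorant; positivity
  rw [Real.norm_of_nonneg h0, rpow_neg (by positivity), rpow_ofNat]
  exact radialMajorant_le hκ hr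

theorem sq_mul_radialMajorant_le {κ r : ℝ} (hκ : 2 ≤ κ) (hr : 0 ≤ r) :
    r ^ 2 * radialMajorant κ r ≤ 2 * ((κ - 1) / ((1 + r) * (κ + r))) := by
  unfold radialMajorant
  field_simp
  have hr2 : r ^ 2 ≤ (1 + r) ^ 2 := by nlinarith
  have hκ2 : κ ^ 2 ≤ (κ + r) * (2 * (κ - 1)) := by nlinarith
  calc r ^ 2 * κ ^ 2 ≤ (1 + r) ^ 2 * ((κ + r) * (2 * (κ - 1))) := by gcongr
    _ = (1 + r) ^ 2 * (κ + r) * 2 * (κ - 1) := by ring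

theorem hasDerivAt_log_one_add_sub_log_add {κ r : ℝ} (hκ : 0 < κ) (hr : 0 ≤ r) :
    HasDerivAt (fun r => log (1 + r) - log (κ + r)) ((κ - 1) / ((1 + r) * (κ + r))) r := by
  have h1 : 1 + r ≠ 0 := by positivity
  have h2 : κ + r ≠ 0 := by positivity
  refine ((((hasDerivAt_id r).const_add 1).log h1).sub
    (((hasDerivAt_id r).const_add κ).log h2)).congr_deriv ?_
  simp only [id]
  field_simp
  ring

theorem tendsto_log_one_add_sub_log_add (κ : ℝ) :
    Tendsto (fun r => log (1 + r) - log (κ + r)) atTop (𝓝 0) := by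
  have h := (tendsto_log_comp_add_sub_log 1).sub (tendsto_log_comp_add_sub_log κ)
  rw [sub_zero] at h
  refine h.congr fun r => ?_
  rw [add_comm r, add_comm r]
  ring

theorem integrableOn_Ioi_sub_one_div_one_add_mul_add {κ : ℝ} (hκ : 1 ≤ κ) :
    IntegrableOn (fun r => (κ - 1) / ((1 + r) * (κ + r))) (Ioi 0) :=
  integrableOn_Ioi_deriv_of_nonneg' (fun _ hr => hasDerivAt_log_one_add_sub_log_add
    (by linarith) hr) (fun r hr => by have : (0:ℝ) < r := hr; positivity)
    (tendsto_log_one_add_sub_log_add κ)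

theorem integral_Ioi_sub_one_div_one_add_mul_add {κ : ℝ} (hκ : 1 ≤ κ) :
    ∫ r in Ioi 0, (κ - 1) / ((1 + r) * (κ + r)) = log κ := by
  rw [integral_Ioi_of_hasDerivAt_of_nonneg' (fun _ hr => hasDerivAt_log_one_add_sub_log_add
    (by linarith) hr) (fun r hr => by have : (0:ℝ) < r := hr; positivity)
    (tendsto_log_one_add_sub_log_add κ)]
  simp

theorem integral_radialMajorant_le {E : Type*} [NormedAddCommGroup E] [NormedSpace ℝ E]
    [FiniteDimensional ℝ E] [MeasurableSpace E] [BorelSpace E] (μ : Measure E)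
    [μ.IsAddHaarMeasure] (hE : finrank ℝ E = 3) {κ : ℝ} (hκ : 2 ≤ κ) :
    ∫ x, radialMajorant κ ‖x‖ ∂μ ≤ 6 * μ.real (Metric.ball 0 1) * log κ := by
  have hradial : ∫ r in Ioi 0, r ^ 2 * radialMajorant κ r ≤ 2 * log κ := by
    rw [← integral_Ioi_sub_one_div_one_add_mul_add (by linarith : (1:ℝ) ≤ κ), ← integral_const_mul]
    refine integral_mono_of_nonneg ?_
      ((integrableOn_Ioi_sub_one_div_one_add_mul_add (by linarith)).const_mul 2) ?_
    · refine (ae_restrict_iff' measurableSet_Ioi).2 (ae_of_all _ fun r (hr : 0 < r) => ?_)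
      unfold radialMajorant
      positivity
    · exact (ae_restrict_iff' measurableSet_Ioi).2
        (ae_of_all _ fun r (hr : 0 < r) => sq_mul_radialMajorant_le hκ hr.le)
  have : Nontrivial E := Module.nontrivial_of_finrank_eq_succ hE
  rw [integral_fun_norm_addHaar μ, hE]
  simp only [nsmul_eq_mul, smul_eq_mul, Nat.cast_ofNat, Nat.add_one_sub_one]
  have hV : 0 ≤ μ.real (Metric.ball 0 1) := measureReal_nonneg
  nlinarith

theorem exists_norm_renormIntegrand_le (ρ : SchwartzMap (EuclideanSpace ℝ (Fin 3)) ℂ)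
    {a A : EuclideanSpace ℝ (Fin 3) → Matrix (Fin 3) (Fin 3) ℝ} {C₀ : ℝ} (hC₀ : 0 < C₀)
    (ha : ∀ x ξ, C₀ * ‖ξ‖ ^ 2 ≤ qform a x ξ) (hA : ∀ x ξ, C₀ * ‖ξ‖ ^ 2 ≤ qform A x ξ) :
    ∃ c, 0 ≤ c ∧ ∀ κ, 0 < κ → ∀ X ξ,
      ‖renormIntegrand ρ a A κ X ξ‖ ≤ c * radialMajorant κ ‖ξ‖ := by
  obtain ⟨f, hf⟩ := exists_schwartzMap_coe_eq_fourierHat ρ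
  obtain ⟨D, hD⟩ := f.exists_one_add_norm_mul_le
  set m := min 1 C₀ / 2
  have hm : 0 < m := half_pos (lt_min one_pos hC₀)
  refine ⟨D ^ 2 * (√m ^ 3)⁻¹, by positivity, fun κ hκ X ξ => ?_⟩
  have hu : (√m * (1 + ‖ξ‖)) ^ 2 ≤ C₀ * ‖ξ‖ ^ 2 + 1 := by
    rw [mul_pow, sq_sqrt hm.le]
    exact half_min_mul_one_add_sq_le hC₀
  have hA0 : 0 ≤ qform A X ξ := (by positivity : 0 ≤ C₀ * ‖ξ‖ ^ 2).trans (hA X ξ)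
  have hsymbol := inv_sqrt_mul_mul_inv_sq_le (s := qform a X ξ) (by positivity) hA0
    (hu.trans (by linarith [ha X ξ])) (hu.trans (by linarith [hA X ξ]))
  have hfourier : ‖fourierHat ρ (κ⁻¹ • ξ)‖ ≤ D * (κ / (κ + ‖ξ‖)) :=
    hf ▸ norm_apply_inv_smul_le hD hκ ξ
  have hsymbol0 : 0 ≤ (√(qform a X ξ + 1))⁻¹ * qform A X ξ * ((qform A X ξ + 1) ^ 2)⁻¹ :=
    mul_nonneg (mul_nonneg (by positivity) hA0) (by positivity)
  rw [renormIntegrand, Real.norm_of_nonneg (by positivity)]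
  calc _ ≤ ((√m * (1 + ‖ξ‖)) ^ 3)⁻¹ * (D * (κ / (κ + ‖ξ‖))) ^ 2 := by gcongr
    _ = D ^ 2 * (√m ^ 3)⁻¹ * radialMajorant κ ‖ξ‖ := by
      rw [radialMajorant, mul_pow, mul_inv]; ring

theorem renorm_function_log_divergence_general (ρ : SchwartzMap (EuclideanSpace ℝ (Fin 3)) ℂ)
    (a A : EuclideanSpace ℝ (Fin 3) → Matrix (Fin 3) (Fin 3) ℝ)
    (C₀ C₁ : ℝ) (hC₀ : 0 < C₀)
    (ha_ell : ∀ x ξ : EuclideanSpace ℝ (Fin 3),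
      C₀ * ‖ξ‖ ^ 2 ≤ qform a x ξ ∧ qform a x ξ ≤ C₁ * ‖ξ‖ ^ 2)
    (hA_ell : ∀ X ξ : EuclideanSpace ℝ (Fin 3),
      C₀ * ‖ξ‖ ^ 2 ≤ qform A X ξ ∧ qform A X ξ ≤ C₁ * ‖ξ‖ ^ 2) :
    (∀ κ : ℝ, 1 ≤ κ → ∀ X : EuclideanSpace ℝ (Fin 3),
      Integrable (fun ξ : EuclideanSpace ℝ (Fin 3) =>
        (Real.sqrt (qform a X ξ + 1))⁻¹ * qform A X ξ * ((qform A X ξ + 1) ^ 2)⁻¹ *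
          ‖fourierHat ρ (κ⁻¹ • ξ)‖ ^ 2)) ∧
    ∃ C : ℝ, ∀ κ : ℝ, 2 ≤ κ → ∀ X : EuclideanSpace ℝ (Fin 3),
      |(-(1 / 2) * ((2 * Real.pi) ^ 3)⁻¹ *
          ∫ ξ : EuclideanSpace ℝ (Fin 3),
            (Real.sqrt (qform a X ξ + 1))⁻¹ * qform A X ξ * ((qform A X ξ + 1) ^ 2)⁻¹ *
              ‖fourierHat ρ (κ⁻¹ • ξ)‖ ^ 2)| ≤ C * Real.log κ := by
  obtain ⟨c, hc0, hc⟩ := exists_norm_renormIntegrand_le ρ hC₀ (fun x ξ => (ha_ell x ξ).1)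
    (fun X ξ => (hA_ell X ξ).1)
  have hdim : finrank ℝ (EuclideanSpace ℝ (Fin 3)) = 3 := finrank_euclideanSpace_fin
  have hmajorant (κ : ℝ) (hκ : 1 ≤ κ) :
      Integrable fun ξ : EuclideanSpace ℝ (Fin 3) => c * radialMajorant κ ‖ξ‖ :=
    (integrable_radialMajorant volume (by omega) hκ).const_mul c
  have hbound (κ : ℝ) (hκ : 1 ≤ κ) (X : EuclideanSpace ℝ (Fin 3)) :
      ∀ᵐ ξ, ‖renormIntegrand ρ a A κ X ξ‖ ≤ c * radialMajorant κ ‖ξ‖ :=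
    ae_of_all _ (hc κ (by linarith) X)
  set V := (volume : Measure (EuclideanSpace ℝ (Fin 3))).real (Metric.ball 0 1)
  refine ⟨fun κ hκ X => (hmajorant κ hκ).mono'
      (measurable_renormIntegrand ρ a A κ X).aestronglyMeasurable (hbound κ hκ X),
    1 / 2 * ((2 * π) ^ 3)⁻¹ * (c * (6 * V)), fun κ hκ X => ?_⟩
  have hintegral : |∫ ξ, renormIntegrand ρ a A κ X ξ| ≤ c * (6 * V * log κ) :=
    calc _ ≤ ∫ ξ, c * radialMajorant κ ‖ξ‖ :=
          norm_integral_le_of_norm_le (hmajorant κ (by linarith)) (hbound κ (by linarith) X)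
      _ = c * ∫ ξ, radialMajorant κ ‖ξ‖ := integral_const_mul _ _
      _ ≤ c * (6 * V * log κ) := by gcongr; exact integral_radialMajorant_le volume hdim hκ
  calc |-(1 / 2) * ((2 * π) ^ 3)⁻¹ * ∫ ξ, renormIntegrand ρ a A κ X ξ|
      = 1 / 2 * ((2 * π) ^ 3)⁻¹ * |∫ ξ, renormIntegrand ρ a A κ X ξ| := by
        rw [abs_mul, abs_mul, abs_neg, abs_of_pos (by positivity : (0:ℝ) < 1 / 2),
          abs_of_pos (by positivity : (0:ℝ) < ((2 * π) ^ 3)⁻¹)]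
    _ ≤ 1 / 2 * ((2 * π) ^ 3)⁻¹ * (c * (6 * V * log κ)) := by gcongr
    _ = 1 / 2 * ((2 * π) ^ 3)⁻¹ * (c * (6 * V)) * log κ := by ring

/-- Logarithmic divergence of the renormalization function: the integral
`E^κ(X) = -(1/2)(2π)^{-3} ∫ (h₀(X,ξ)+1)^{-1/2} K(X,ξ)(K(X,ξ)+1)^{-2}|ρ̂(ξ/κ)|² dξ`
is absolutely convergent and `|E^κ(X)| ≤ C log κ` for `κ ≥ 2`, uniformly in `X`. -/
theorem renorm_function_log_divergence (ρ : SchwartzMap (EuclideanSpace ℝ (Fin 3)) ℂ)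
    (a A : EuclideanSpace ℝ (Fin 3) → Matrix (Fin 3) (Fin 3) ℝ)
    (C₀ C₁ : ℝ) (hC₀ : 0 < C₀) (hC₀₁ : C₀ ≤ C₁)
    (ha_symm : ∀ x, (a x).IsSymm) (hA_symm : ∀ X, (A X).IsSymm)
    (ha_meas : ∀ i j, Measurable fun x => a x i j)
    (hA_meas : ∀ i j, Measurable fun X => A X i j)
    (ha_ell : ∀ x ξ : EuclideanSpace ℝ (Fin 3),
      C₀ * ‖ξ‖ ^ 2 ≤ qform a x ξ ∧ qform a x ξ ≤ C₁ * ‖ξ‖ ^ 2)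
    (hA_ell : ∀ X ξ : EuclideanSpace ℝ (Fin 3),
      C₀ * ‖ξ‖ ^ 2 ≤ qform A X ξ ∧ qform A X ξ ≤ C₁ * ‖ξ‖ ^ 2) :
    (∀ κ : ℝ, 1 ≤ κ → ∀ X : EuclideanSpace ℝ (Fin 3),
      Integrable (fun ξ : EuclideanSpace ℝ (Fin 3) =>
        (Real.sqrt (qform a X ξ + 1))⁻¹ * qform A X ξ * ((qform A X ξ + 1) ^ 2)⁻¹ *
          ‖fourierHat ρ (κ⁻¹ • ξ)‖ ^ 2)) ∧
    ∃ C : ℝ, ∀ κ : ℝ, 2 ≤ κ → ∀ X : EuclideanSpace ℝ (Fin 3),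
      |(-(1 / 2) * ((2 * Real.pi) ^ 3)⁻¹ *
          ∫ ξ : EuclideanSpace ℝ (Fin 3),
            (Real.sqrt (qform a X ξ + 1))⁻¹ * qform A X ξ * ((qform A X ξ + 1) ^ 2)⁻¹ *
              ‖fourierHat ρ (κ⁻¹ • ξ)‖ ^ 2)| ≤ C * Real.log κ :=
  renorm_function_log_divergence_general ρ a A C₀ C₁ hC₀ ha_ell hA_ell
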